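/- Define E(x) = ∑_{i=1}^{3} i·D_i(x). For every l ∈ {0,1,2,3} and every k ∈ D_l, one has E(β^k) = E(β) - l in GR(4, 4^ℓ), i.e., ∑_{i=1}^{3} i·D_i(β^k) = ρ - l. -/

import Mathlib

/-!
Write `χ(y) = y^((q-1)/4)` for the quartic residue character modulo `q`. Since
`h ≡ 1 (mod q)`, `D_i` is exactly the set of units `x` of `ℤ/pq` with `χ(x) = χ(g)^i`: every
unit is `g^u h^v` by the Chinese remainder theorem, and `h^4` is a power of `g^4` because
`gcd(p-1, q-1) = 4`. Multiplication by `k ∈ D_l` therefore maps `D_i` bijectively onto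
`D_{i+l}`, so `D_i(β^k) = D_{i+l}(β)`.

In `GR(4, 4^ℓ)` every non-unit squares to zero and `4 = 0`, so `γ - 1` is a unit whenever
`γ ≠ 1` has odd order (otherwise `γ^4 = 1`); hence the geometric sums of `β`, `β^p`, `β^q`
over a period vanish, and inclusion–exclusion gives `∑_i D_i(β) = ∑_{x unit} β^x = 1`.
Finally, as `4 = 0`, `∑ i D_{i+l}(β) = ∑ (i - l) D_i(β) = ρ - l`.
-/

open Finset

namespace TruncatedWittVector

variable {p : ℕ} [Fact p.Prime] {K : Type*}

theorem mul_self_eq_zero_of_coeff_zero [CommRing K] [CharP K p]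
    {x : TruncatedWittVector p 2 K} (hx : x.coeff 0 = 0) : x * x = 0 := by
  obtain ⟨y, rfl⟩ := WittVector.truncate_surjective (p := p) 2 K x
  have hy : y = WittVector.verschiebung^[1] (y.shift 1) :=
    WittVector.eq_iterate_verschiebung fun i hi => by
      rw [Nat.lt_one_iff.mp hi]; rwa [WittVector.coeff_truncate] at hx
  rw [← map_mul, hy, WittVector.iterate_verschiebung_mul]
  ext i
  rw [WittVector.coeff_truncate, WittVector.iterate_verschiebung_coeff_eq_zero _ i.2,
    TruncatedWittVector.coeff_zero]

theorem natCast_sq_eq_zero [CommRing K] [CharP K p] :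
    (p : TruncatedWittVector p 2 K) ^ 2 = 0 := by
  have hp : (p : TruncatedWittVector p 2 K).coeff 0 = 0 := by
    rw [← map_natCast (WittVector.truncate 2), WittVector.coeff_truncate]
    exact WittVector.coeff_p_zero p K
  rw [sq]
  exact mul_self_eq_zero_of_coeff_zero hp

theorem four_eq_zero [CommRing K] [CharP K 2] : (4 : TruncatedWittVector 2 2 K) = 0 := by
  have := natCast_sq_eq_zero (p := 2) (K := K)
  norm_num at this
  exact this

theorem isUnit_or_mul_self_eq_zero [Field K] [CharP K p] (x : TruncatedWittVector p 2 K) :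
    IsUnit x ∨ x * x = 0 := by
  obtain ⟨y, rfl⟩ := WittVector.truncate_surjective (p := p) 2 K x
  by_cases hy : y.coeff 0 = 0
  · exact .inr (mul_self_eq_zero_of_coeff_zero (by rwa [WittVector.coeff_truncate]))
  · exact .inl ((WittVector.isUnit_of_coeff_zero_ne_zero y hy).map _)

end TruncatedWittVector

theorem range_mul_filter_dvd_eq_image {a : ℕ} (ha : 0 < a) (b : ℕ) :
    {n ∈ range (a * b) | a ∣ n} = (range b).image (a * ·) := by
  ext n
  simp only [mem_filter, mem_range, mem_image]
  constructor
  · rintro ⟨hlt, t, rfl⟩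
    exact ⟨t, Nat.lt_of_mul_lt_mul_left hlt, rfl⟩
  · rintro ⟨t, ht, rfl⟩
    exact ⟨Nat.mul_lt_mul_of_pos_left ht ha, dvd_mul_right a t⟩

section SquareZeroNonunits

variable {R : Type*} [CommRing R]

theorem isUnit_sub_one_of_pow_eq_one (h4 : (4 : R) = 0) (hR : ∀ x : R, IsUnit x ∨ x * x = 0)
    {γ : R} {m : ℕ} (hm : Odd m) (hγm : γ ^ m = 1) (hγ : γ ≠ 1) : IsUnit (γ - 1) := by
  refine (hR _).resolve_right fun hsq => hγ ?_
  have hγ4 : γ ^ 4 = 1 := by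
    linear_combination ((γ - 1) * (γ - 1) + 4 * (γ - 1) + 6) * hsq + (γ - 1) * h4
  have hcop : Nat.Coprime 4 m := (Nat.coprime_two_left.mpr hm).pow_left 2
  exact orderOf_eq_one_iff.mp <| Nat.eq_one_of_dvd_coprimes hcop
    (orderOf_dvd_of_pow_eq_one hγ4) (orderOf_dvd_of_pow_eq_one hγm)

theorem geom_sum_eq_zero_of_pow_eq_one (h4 : (4 : R) = 0) (hR : ∀ x : R, IsUnit x ∨ x * x = 0)
    {γ : R} {m : ℕ} (hm : Odd m) (hγm : γ ^ m = 1) (hγ : γ ≠ 1) :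
    ∑ n ∈ range m, γ ^ n = 0 :=
  (isUnit_sub_one_of_pow_eq_one h4 hR hm hγm hγ).mul_right_eq_zero.mp
    (by rw [mul_geom_sum, hγm, sub_self])

theorem sum_range_filter_dvd_pow_eq_zero (h4 : (4 : R) = 0)
    (hR : ∀ x : R, IsUnit x ∨ x * x = 0) {a b : ℕ} (hb : Odd b) {β : R}
    (hβ : orderOf β = a * b) (hab : a < a * b) :
    ∑ n ∈ range (a * b) with a ∣ n, β ^ n = 0 := by
  have ha : 0 < a := Nat.pos_of_ne_zero fun ha => by simp [ha] at hab
  rw [range_mul_filter_dvd_eq_image ha, sum_image fun _ _ _ _ => Nat.eq_of_mul_eq_mul_left ha]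
  simp_rw [pow_mul]
  exact geom_sum_eq_zero_of_pow_eq_one h4 hR hb (by rw [← pow_mul, ← hβ, pow_orderOf_eq_one])
    (pow_ne_one_of_lt_orderOf ha.ne' (hβ ▸ hab))

theorem sum_range_filter_coprime_pow_eq_one (h4 : (4 : R) = 0)
    (hR : ∀ x : R, IsUnit x ∨ x * x = 0) {p q : ℕ} (hp : p.Prime) (hq : q.Prime)
    (hpq : p ≠ q) (hodd : Odd (p * q)) {β : R} (hβ : orderOf β = p * q) :
    ∑ n ∈ range (p * q) with n.Coprime (p * q), β ^ n = 1 := by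
  have hcoprime : ∀ n : ℕ, n.Coprime (p * q) ↔ ¬(p ∣ n ∨ q ∣ n) := fun n => by
    rw [Nat.coprime_mul_iff_right, Nat.coprime_comm, hp.coprime_iff_not_dvd, Nat.coprime_comm,
      hq.coprime_iff_not_dvd, not_or]
  have htotal : ∑ n ∈ range (p * q), β ^ n = 0 :=
    geom_sum_eq_zero_of_pow_eq_one h4 hR hodd (hβ ▸ pow_orderOf_eq_one β) fun h1 => by
      rw [h1, orderOf_one] at hβ
      nlinarith [hp.two_le, hq.two_le]
  have hmultp : ∑ n ∈ range (p * q) with p ∣ n, β ^ n = 0 :=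
    sum_range_filter_dvd_pow_eq_zero h4 hR (Nat.Odd.of_mul_right hodd) hβ
      (lt_mul_right hp.pos hq.one_lt)
  have hmultq : ∑ n ∈ range (p * q) with q ∣ n, β ^ n = 0 := by
    rw [mul_comm p q] at hβ ⊢
    exact sum_range_filter_dvd_pow_eq_zero h4 hR (Nat.Odd.of_mul_left hodd) hβ
      (lt_mul_right hq.pos hp.one_lt)
  have hmultpq : {n ∈ range (p * q) | p ∣ n} ∩ {n ∈ range (p * q) | q ∣ n} = {0} := by
    ext n
    simp only [mem_inter, mem_filter, mem_range, mem_singleton]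
    constructor
    · rintro ⟨⟨hn, hpn⟩, -, hqn⟩
      exact Nat.eq_zero_of_dvd_of_lt
        (((Nat.coprime_primes hp hq).mpr hpq).mul_dvd_of_dvd_of_dvd hpn hqn) hn
    · rintro rfl
      have hpq0 : 0 < p * q := Nat.mul_pos hp.pos hq.pos
      exact ⟨⟨hpq0, dvd_zero p⟩, hpq0, dvd_zero q⟩
  have hincl := sum_union_inter (f := (β ^ ·)) (s₁ := {n ∈ range (p * q) | p ∣ n})
    (s₂ := {n ∈ range (p * q) | q ∣ n})
  rw [hmultpq, sum_singleton, pow_zero, hmultp, hmultq, ← filter_or] at hincl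
  have hsplit :=
    sum_filter_add_sum_filter_not (range (p * q)) (fun n => p ∣ n ∨ q ∣ n) (β ^ ·)
  rw [filter_congr fun n _ => hcoprime n]
  linear_combination hsplit - hincl + htotal

end SquareZeroNonunits

namespace ZMod

theorem sum_val_eq_sum_range {M : Type*} [AddCommMonoid M] (N : ℕ) [NeZero N] (f : ℕ → M) :
    ∑ x : ZMod N, f x.val = ∑ n ∈ range N, f n := by
  obtain ⟨n, rfl⟩ := Nat.exists_eq_succ_of_ne_zero (NeZero.ne N)
  exact Fin.sum_univ_eq_sum_range f _

theorem sum_filter_isUnit_val {M : Type*} [AddCommMonoid M] (N : ℕ) [NeZero N] (f : ℕ → M) :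
    ∑ x : ZMod N with IsUnit x, f x.val = ∑ n ∈ range N with n.Coprime N, f n := by
  rw [sum_filter, sum_filter, ← sum_val_eq_sum_range]
  refine sum_congr rfl fun x _ => if_congr ?_ rfl rfl
  rw [← isUnit_iff_coprime, natCast_zmod_val]

theorem eq_of_castHom_eq {p q : ℕ} (hpq : p.Coprime q) {x y : ZMod (p * q)}
    (hp : castHom (dvd_mul_right p q) (ZMod p) x = castHom (dvd_mul_right p q) (ZMod p) y)
    (hq : castHom (dvd_mul_left q p) (ZMod q) x = castHom (dvd_mul_left q p) (ZMod q) y) :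
    x = y :=
  (chineseRemainder hpq).injective <| Prod.ext (by simpa [chineseRemainder] using hp)
    (by simpa [chineseRemainder] using hq)

theorem isUnit_natCast_mul {p q n : ℕ} (hp : IsUnit (n : ZMod p)) (hq : IsUnit (n : ZMod q)) :
    IsUnit (n : ZMod (p * q)) := by
  rw [isUnit_iff_coprime] at hp hq ⊢
  exact hp.mul_right hq

end ZMod

section DingHellesethClass

variable {M : Type*} [CommMonoid M] [DecidableEq M]

def dingHellesethClass (n : ℕ) (g h : M) (i : ℕ) : Finset M :=
  (range n ×ˢ range 4).image fun sj => g ^ (4 * sj.1 + i) * h ^ sj.2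

theorem pow_mul_pow_mem_dingHellesethClass {n : ℕ} {g h : M} (hn : 0 < n)
    (hg : g ^ (4 * n) = 1) {c : ℕ} (hh : h ^ 4 = g ^ (4 * c)) (u v : ℕ) :
    g ^ u * h ^ v ∈ dingHellesethClass n g h (u % 4) := by
  set s := u / 4 + c * (v / 4)
  have hreduce : g ^ u * h ^ v = g ^ (4 * s + u % 4) * h ^ (v % 4) := by
    conv_lhs => rw [← Nat.mod_add_div u 4, ← Nat.mod_add_div v 4, pow_add h, pow_mul h, hh,
      ← pow_mul]
    simp only [s, mul_add, pow_add]
    ac_rfl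
  have hperiod : g ^ (4 * s) = g ^ (4 * (s % n)) := by
    conv_lhs => rw [← Nat.mod_add_div s n]
    rw [mul_add, pow_add, ← mul_assoc, pow_mul g (4 * n), hg, one_pow, mul_one]
  refine mem_image.mpr ⟨(s % n, v % 4), mem_product.mpr ⟨mem_range.mpr (Nat.mod_lt _ hn),
    mem_range.mpr (Nat.mod_lt _ (by norm_num))⟩, ?_⟩
  rw [hreduce, pow_add g (4 * s), hperiod, ← pow_add]

theorem isUnit_of_mem_dingHellesethClass {n : ℕ} {g h : M} (hg : IsUnit g) (hh : IsUnit h)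
    {i : ℕ} {x : M} (hx : x ∈ dingHellesethClass n g h i) : IsUnit x := by
  obtain ⟨⟨s, j⟩, -, rfl⟩ := mem_image.mp hx
  exact (hg.pow _).mul (hh.pow _)

theorem map_eq_pow_of_mem_dingHellesethClass {N : Type*} [CommMonoid N] (χ : M →* N) {n : ℕ}
    {g h : M} (hχg : χ g ^ 4 = 1) (hχh : χ h = 1) {i : ℕ} {x : M}
    (hx : x ∈ dingHellesethClass n g h i) : χ x = χ g ^ i := by
  obtain ⟨⟨s, j⟩, -, rfl⟩ := mem_image.mp hx
  rw [map_mul, map_pow, map_pow, hχh, one_pow, mul_one, pow_add, pow_mul, hχg, one_pow, one_mul]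

end DingHellesethClass

section UnitFibres

variable {M N A : Type*} [CommMonoid M] [Fintype M] [DecidablePred (IsUnit : M → Prop)]
  [CommMonoid N] [DecidableEq N] [AddCommMonoid A]

theorem sum_filter_isUnit_map_eq_mul_left (χ : M →* N) (k : Mˣ) (c : N) (f : M → A) :
    ∑ x with IsUnit x ∧ χ x = c, f (k * x) = ∑ x with IsUnit x ∧ χ x = χ k * c, f x := by
  refine sum_nbij' (k * ·) (↑k⁻¹ * ·) ?_ ?_ (fun x _ => k.inv_mul_cancel_left x)
    (fun y _ => k.mul_inv_cancel_left y) fun _ _ => rfl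
  · simp only [mem_filter, mem_univ, true_and, map_mul]
    rintro x ⟨hx, rfl⟩
    exact ⟨k.isUnit.mul hx, rfl⟩
  · simp only [mem_filter, mem_univ, true_and, map_mul]
    rintro y ⟨hy, hχy⟩
    refine ⟨k⁻¹.isUnit.mul hy, ?_⟩
    rw [hχy, ← mul_assoc, ← map_mul, Units.inv_mul, map_one, one_mul]

theorem sum_range_sum_filter_isUnit_map_eq_pow (χ : M →* N) {ζ : N} {m : ℕ}
    (hζ : IsPrimitiveRoot ζ m) (hχ : ∀ x, IsUnit x → ∃ i < m, ζ ^ i = χ x)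
    (f : M → A) :
    ∑ i ∈ range m, ∑ x with IsUnit x ∧ χ x = ζ ^ i, f x = ∑ x with IsUnit x, f x := by
  have hmaps : ∀ x ∈ ({x | IsUnit x} : Finset M), χ x ∈ (range m).image (ζ ^ ·) := by
    intro x hx
    obtain ⟨i, hi, hix⟩ := hχ x (mem_filter.mp hx).2
    exact mem_image.mpr ⟨i, mem_range.mpr hi, hix⟩
  rw [← sum_fiberwise_of_maps_to hmaps, sum_image fun i hi j hj hij =>
    hζ.pow_inj (mem_range.mp hi) (mem_range.mp hj) hij]
  simp only [filter_filter]

end UnitFibres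

def quarticChar (p q : ℕ) : ZMod (p * q) →* ZMod q :=
  (powMonoidHom ((q - 1) / 4)).comp (ZMod.castHom (dvd_mul_left q p) (ZMod q)).toMonoidHom

def quarticClass (p q : ℕ) [NeZero (p * q)] (g i : ℕ) : Finset (ZMod (p * q)) :=
  {x | IsUnit x ∧ quarticChar p q x = quarticChar p q g ^ i}

section QuarticChar

variable {p q : ℕ}

theorem quarticChar_apply (x : ZMod (p * q)) :
    quarticChar p q x = ZMod.castHom (dvd_mul_left q p) (ZMod q) x ^ ((q - 1) / 4) :=
  rfl

theorem quarticChar_natCast (n : ℕ) : quarticChar p q n = (n : ZMod q) ^ ((q - 1) / 4) := by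
  rw [quarticChar_apply, map_natCast]

theorem isPrimitiveRoot_quarticChar_natCast (hq : q.Prime) {g : ℕ}
    (hg : IsPrimitiveRoot (g : ZMod q) (q - 1)) (h4 : 4 ∣ q - 1) :
    IsPrimitiveRoot (quarticChar p q g) 4 := by
  have hq1 : q - 1 ≠ 0 := Nat.sub_ne_zero_of_lt hq.one_lt
  have := hg.pow_of_dvd (Nat.div_ne_zero_iff_of_dvd h4 |>.mpr ⟨hq1, four_ne_zero⟩)
    (Nat.div_dvd_of_dvd h4)
  rwa [Nat.div_div_self h4 hq1, ← quarticChar_natCast] at this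

theorem exists_pow_eq_quarticChar (hq : q.Prime) {ζ : ZMod q} (hζ : IsPrimitiveRoot ζ 4)
    (h4 : 4 ∣ q - 1) {x : ZMod (p * q)} (hx : IsUnit x) :
    ∃ i < 4, ζ ^ i = quarticChar p q x := by
  have := Fact.mk hq
  refine hζ.eq_pow_of_pow_eq_one ?_
  rw [quarticChar_apply, ← pow_mul, Nat.div_mul_cancel h4]
  exact ZMod.pow_card_sub_one_eq_one (hx.map _).ne_zero

variable [NeZero (p * q)] {g : ℕ}

theorem mem_quarticClass {i : ℕ} {x : ZMod (p * q)} :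
    x ∈ quarticClass p q g i ↔ IsUnit x ∧ quarticChar p q x = quarticChar p q g ^ i :=
  mem_filter_univ x

theorem sum_quarticClass_mul_left {A : Type*} [AddCommMonoid A] (hq : q.Prime)
    (hg : IsPrimitiveRoot (g : ZMod q) (q - 1)) (h4 : 4 ∣ q - 1) {k : ZMod (p * q)} {l : ℕ}
    (hk : k ∈ quarticClass p q g l) (i : ℕ) (f : ZMod (p * q) → A) :
    ∑ x ∈ quarticClass p q g i, f (k * x)
      = ∑ x ∈ quarticClass p q g ((i + l) % 4), f x := by
  obtain ⟨hku, hχk⟩ := mem_quarticClass.mp hk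
  have hχg := isPrimitiveRoot_quarticChar_natCast (p := p) hq hg h4
  rw [← hku.unit_spec, quarticClass, sum_filter_isUnit_map_eq_mul_left, hku.unit_spec, hχk,
    ← pow_add, add_comm, ← pow_mod_orderOf, ← hχg.eq_orderOf, quarticClass]

theorem sum_range_sum_quarticClass {A : Type*} [AddCommMonoid A] (hq : q.Prime)
    (hg : IsPrimitiveRoot (g : ZMod q) (q - 1)) (h4 : 4 ∣ q - 1) (f : ZMod (p * q) → A) :
    ∑ i ∈ range 4, ∑ x ∈ quarticClass p q g i, f x
      = ∑ x : ZMod (p * q) with IsUnit x, f x := by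
  have hχg := isPrimitiveRoot_quarticChar_natCast (p := p) hq hg h4
  exact sum_range_sum_filter_isUnit_map_eq_pow _ hχg
    (fun x hx => exists_pow_eq_quarticChar hq hχg h4 hx) f

end QuarticChar

section CyclotomicGenerators

variable {p q g h : ℕ}

theorem natCast_pow_eq_one (hpq : p.Coprime q) (hgp : IsPrimitiveRoot (g : ZMod p) (p - 1))
    (hgq : IsPrimitiveRoot (g : ZMod q) (q - 1)) {m : ℕ} (hmp : p - 1 ∣ m) (hmq : q - 1 ∣ m) :
    (g : ZMod (p * q)) ^ m = 1 :=
  ZMod.eq_of_castHom_eq hpq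
    (by rw [map_pow, map_natCast, map_one, hgp.pow_eq_one_iff_dvd]; exact hmp)
    (by rw [map_pow, map_natCast, map_one, hgq.pow_eq_one_iff_dvd]; exact hmq)

theorem exists_natCast_pow_four_eq (hp : p.Prime) (hpq : p.Coprime q)
    (hgcd : Nat.gcd (p - 1) (q - 1) = 4) (hgp : IsPrimitiveRoot (g : ZMod p) (p - 1))
    (hgq : IsPrimitiveRoot (g : ZMod q) (q - 1)) (hhp : (h : ZMod p) = g) (hhq : (h : ZMod q) = 1) :
    ∃ c, (h : ZMod (p * q)) ^ 4 = (g : ZMod (p * q)) ^ (4 * c) := by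
  -- any `k ≡ 4 (mod p - 1)`, `k ≡ 0 (mod q - 1)` has `h^4 = g^k`; it exists as `gcd = 4`
  obtain ⟨k, hkp, hkq⟩ := Nat.chineseRemainder' (n := p - 1) (m := q - 1) (a := 4) (b := 0)
    (by rw [hgcd]; rfl)
  obtain ⟨c, rfl⟩ : 4 ∣ k :=
    (hgcd ▸ Nat.gcd_dvd_right _ _ : 4 ∣ q - 1).trans (Nat.modEq_zero_iff_dvd.mp hkq)
  refine ⟨c, ZMod.eq_of_castHom_eq hpq ?_ ?_⟩
  · rw [map_pow, map_pow, map_natCast, map_natCast, hhp,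
      (hgp.isOfFinOrder (Nat.sub_ne_zero_of_lt hp.one_lt)).pow_eq_pow_iff_modEq, ← hgp.eq_orderOf]
    exact hkp.symm
  · rw [map_pow, map_pow, map_natCast, map_natCast, hhq, one_pow, eq_comm,
      hgq.pow_eq_one_iff_dvd]
    exact Nat.modEq_zero_iff_dvd.mp hkq

theorem exists_eq_natCast_pow_mul_pow (hp : p.Prime) (hq : q.Prime) (hpq : p.Coprime q)
    (hgp : IsPrimitiveRoot (g : ZMod p) (p - 1)) (hgq : IsPrimitiveRoot (g : ZMod q) (q - 1))
    (hhp : (h : ZMod p) = g) (hhq : (h : ZMod q) = 1) {x : ZMod (p * q)} (hx : IsUnit x) :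
    ∃ u v : ℕ, x = (g : ZMod (p * q)) ^ u * (h : ZMod (p * q)) ^ v := by
  have := Fact.mk hp
  have := Fact.mk hq
  have : NeZero (p - 1) := ⟨Nat.sub_ne_zero_of_lt hp.one_lt⟩
  have : NeZero (q - 1) := ⟨Nat.sub_ne_zero_of_lt hq.one_lt⟩
  obtain ⟨c, -, hc⟩ := hgp.eq_pow_of_pow_eq_one (ZMod.pow_card_sub_one_eq_one (hx.map
    (ZMod.castHom (dvd_mul_right p q) (ZMod p))).ne_zero)
  obtain ⟨u, -, hu⟩ := hgq.eq_pow_of_pow_eq_one (ZMod.pow_card_sub_one_eq_one (hx.map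
    (ZMod.castHom (dvd_mul_left q p) (ZMod q))).ne_zero)
  -- mod `q` only the power of `g` is seen; mod `p` the power of `h` corrects it to `g^c`
  refine ⟨u, c + (p - 2) * u, ZMod.eq_of_castHom_eq hpq ?_ ?_⟩
  · have hexp : u + (c + (p - 2) * u) = c + (p - 1) * u := by
      rw [show p - 1 = p - 2 + 1 by have := hp.two_le; omega]
      ring
    rw [map_mul, map_pow, map_pow, map_natCast, map_natCast, hhp, ← pow_add, hexp, pow_add,
      pow_mul, hgp.pow_eq_one, one_pow, mul_one, hc]
  · rw [map_mul, map_pow, map_pow, map_natCast, map_natCast, hhq, one_pow, mul_one, hu]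

theorem dingHellesethClass_eq_quarticClass [NeZero (p * q)] (hp : p.Prime) (hq : q.Prime)
    (hpq : p ≠ q) (hgcd : Nat.gcd (p - 1) (q - 1) = 4) {n : ℕ} (hn : 16 * n = (p - 1) * (q - 1))
    (hgp : IsPrimitiveRoot (g : ZMod p) (p - 1)) (hgq : IsPrimitiveRoot (g : ZMod q) (q - 1))
    (hhp : (h : ZMod p) = g) (hhq : (h : ZMod q) = 1) {i : ℕ} (hi : i < 4) :
    dingHellesethClass n (g : ZMod (p * q)) h i = quarticClass p q g i := by
  have hcop : p.Coprime q := (Nat.coprime_primes hp hq).mpr hpq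
  obtain ⟨a, ha⟩ : 4 ∣ p - 1 := hgcd ▸ Nat.gcd_dvd_left _ _
  obtain ⟨b, hb⟩ : 4 ∣ q - 1 := hgcd ▸ Nat.gcd_dvd_right _ _
  obtain rfl : n = a * b := by rw [ha, hb] at hn; linarith
  have hχg := isPrimitiveRoot_quarticChar_natCast (p := p) hq hgq ⟨b, hb⟩
  have hχh : quarticChar p q h = 1 := by rw [quarticChar_natCast, hhq, one_pow]
  ext x
  rw [mem_quarticClass]
  constructor
  · intro hx
    refine ⟨isUnit_of_mem_dingHellesethClass ?_ ?_ hx,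
      map_eq_pow_of_mem_dingHellesethClass _ hχg.pow_eq_one hχh hx⟩
    · exact ZMod.isUnit_natCast_mul (hgp.isUnit (Nat.sub_ne_zero_of_lt hp.one_lt))
        (hgq.isUnit (Nat.sub_ne_zero_of_lt hq.one_lt))
    · exact ZMod.isUnit_natCast_mul (hhp ▸ hgp.isUnit (Nat.sub_ne_zero_of_lt hp.one_lt))
        (hhq ▸ isUnit_one)
  · rintro ⟨hx, hχx⟩
    obtain ⟨u, v, rfl⟩ := exists_eq_natCast_pow_mul_pow hp hq hcop hgp hgq hhp hhq hx
    have hu : u % 4 = i := by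
      rw [map_mul, map_pow, map_pow, hχh, one_pow, mul_one, ← pow_mod_orderOf,
        ← hχg.eq_orderOf] at hχx
      exact hχg.pow_inj (Nat.mod_lt _ four_pos) hi hχx
    have hg : (g : ZMod (p * q)) ^ (4 * (a * b)) = 1 :=
      natCast_pow_eq_one hcop hgp hgq ⟨b, by rw [ha]; ring⟩ ⟨a, by rw [hb]; ring⟩
    have hab : 0 < a * b :=
      Nat.mul_pos (by have := hp.two_le; omega) (by have := hq.two_le; omega)
    obtain ⟨c, hc⟩ := exists_natCast_pow_four_eq hp hcop hgcd hgp hgq hhp hhq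
    exact hu ▸ pow_mul_pow_mem_dingHellesethClass hab hg hc u v

end CyclotomicGenerators

section ModFourShift

variable {R : Type*} [CommRing R]

theorem sum_Icc_mul_mod_four_shift (h4 : (4 : R) = 0) (S : ℕ → R) {l : ℕ} (hl : l < 4) :
    ∑ i ∈ Icc (1 : ℕ) 3, (i : R) * S ((i + l) % 4)
      = ∑ i ∈ Icc (1 : ℕ) 3, (i : R) * S i - l * ∑ i ∈ range 4, S i := by
  have hIcc : Icc 1 3 = {1, 2, 3} := rfl
  interval_cases l <;> simp [hIcc, sum_range_succ]
  · linear_combination S 0 * h4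
  · linear_combination (S 0 + S 1) * h4
  · linear_combination (S 0 + S 1 + S 2) * h4

end ModFourShift

theorem pow_val_pow_val {M : Type*} [Monoid M] {β : M} {N : ℕ} (hβ : orderOf β = N)
    (k u : ZMod N) : (β ^ k.val) ^ u.val = β ^ (k * u).val := by
  subst hβ
  rw [← pow_mul, ZMod.val_mul, pow_mod_orderOf]

theorem stmt17_general
    (p q : ℕ) (hp : Nat.Prime p) (hq : Nat.Prime q) (hne : p ≠ q)
    (hpo : Odd p) (hqo : Odd q)
    (hgcd : Nat.gcd (p - 1) (q - 1) = 4)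
    (e : ℕ) (he : e = (p - 1) * (q - 1) / 4)
    (g h : ℕ)
    (hgp : orderOf (g : ZMod p) = p - 1)
    (hgq : orderOf (g : ZMod q) = q - 1)
    (hhp : (h : ZMod p) = (g : ZMod p))
    (hhq : (h : ZMod q) = 1)
    (D : ℕ → Finset (ZMod (p * q)))
    (hD : ∀ i, D i = (Finset.range (e / 4) ×ˢ Finset.range 4).image
        (fun sj => (g : ZMod (p * q)) ^ (4 * sj.1 + i) * (h : ZMod (p * q)) ^ sj.2))
    (ℓ : ℕ) (β : TruncatedWittVector 2 2 (GaloisField 2 ℓ))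
    (hβo : orderOf β = p * q)
    (ρ : TruncatedWittVector 2 2 (GaloisField 2 ℓ))
    (hρ : ρ = ∑ i ∈ Finset.Icc (1 : ℕ) 3, ((i : ℕ) : TruncatedWittVector 2 2 (GaloisField 2 ℓ)) * ∑ u ∈ D i, β ^ u.val)
 :
    ∀ l < 4, ∀ k ∈ D l,
      ∑ i ∈ Finset.Icc (1 : ℕ) 3,
          ((i : ℕ) : TruncatedWittVector 2 2 (GaloisField 2 ℓ)) * (∑ u ∈ D i, (β ^ k.val) ^ u.val)
        = ρ - (l : TruncatedWittVector 2 2 (GaloisField 2 ℓ)) := by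
  intro l hl k hk
  have : NeZero (p * q) := ⟨Nat.mul_ne_zero hp.ne_zero hq.ne_zero⟩
  have h4q : 4 ∣ q - 1 := hgcd ▸ Nat.gcd_dvd_right _ _
  have hgq' : IsPrimitiveRoot (g : ZMod q) (q - 1) := hgq ▸ IsPrimitiveRoot.orderOf _
  have hn : 16 * (e / 4) = (p - 1) * (q - 1) := by
    rw [he, Nat.div_div_eq_div_mul, mul_comm,
      Nat.div_mul_cancel (Nat.mul_dvd_mul (hgcd ▸ Nat.gcd_dvd_left _ _) h4q)]
  have hclass : ∀ i < 4, D i = quarticClass p q g i := fun i hi =>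
    (hD i).trans <| dingHellesethClass_eq_quarticClass hp hq hne hgcd hn
      (hgp ▸ IsPrimitiveRoot.orderOf _) hgq' hhp hhq hi
  have hshift : ∀ i ∈ Icc 1 3,
      ∑ u ∈ D i, (β ^ k.val) ^ u.val = ∑ u ∈ D ((i + l) % 4), β ^ u.val := fun i hi => by
    rw [hclass i (by simp at hi; omega), hclass _ (Nat.mod_lt _ four_pos)]
    simp_rw [pow_val_pow_val hβo]
    exact sum_quarticClass_mul_left hq hgq' h4q (hclass l hl ▸ hk) i (β ^ ·.val)
  have htotal : ∑ i ∈ range 4, ∑ u ∈ D i, β ^ u.val = 1 := by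
    rw [sum_congr rfl fun i hi => by rw [hclass i (mem_range.mp hi)],
      sum_range_sum_quarticClass hq hgq' h4q, ZMod.sum_filter_isUnit_val (p * q) (β ^ ·)]
    exact sum_range_filter_coprime_pow_eq_one TruncatedWittVector.four_eq_zero
      TruncatedWittVector.isUnit_or_mul_self_eq_zero hp hq hne (hpo.mul hqo) hβo
  rw [sum_congr rfl fun i hi => by rw [hshift i hi], hρ, sum_Icc_mul_mod_four_shift
    TruncatedWittVector.four_eq_zero (fun j => ∑ u ∈ D j, β ^ u.val) hl, htotal, mul_one]

theorem stmt17
    (p q : ℕ) (hp : Nat.Prime p) (hq : Nat.Prime q) (hne : p ≠ q)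
    (hpo : Odd p) (hqo : Odd q)
    (hgcd : Nat.gcd (p - 1) (q - 1) = 4)
    (e : ℕ) (he : e = (p - 1) * (q - 1) / 4)
    (g h : ℕ)
    (hgp : orderOf (g : ZMod p) = p - 1)
    (hgq : orderOf (g : ZMod q) = q - 1)
    (hhp : (h : ZMod p) = (g : ZMod p))
    (hhq : (h : ZMod q) = 1)
    (D : ℕ → Finset (ZMod (p * q)))
    (hD : ∀ i, D i = (Finset.range (e / 4) ×ˢ Finset.range 4).image
        (fun sj => (g : ZMod (p * q)) ^ (4 * sj.1 + i) * (h : ZMod (p * q)) ^ sj.2))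
    (ℓ : ℕ) (β : TruncatedWittVector 2 2 (GaloisField 2 ℓ))
    (hβu : IsUnit β) (hβo : orderOf β = p * q)
    (ρ : TruncatedWittVector 2 2 (GaloisField 2 ℓ))
    (hρ : ρ = ∑ i ∈ Finset.Icc (1 : ℕ) 3, ((i : ℕ) : TruncatedWittVector 2 2 (GaloisField 2 ℓ)) * ∑ u ∈ D i, β ^ u.val)
 :
    ∀ l < 4, ∀ k ∈ D l,
      ∑ i ∈ Finset.Icc (1 : ℕ) 3,
          ((i : ℕ) : TruncatedWittVector 2 2 (GaloisField 2 ℓ)) * (∑ u ∈ D i, (β ^ k.val) ^ u.val)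
        = ρ - (l : TruncatedWittVector 2 2 (GaloisField 2 ℓ)) :=
  stmt17_general p q hp hq hne hpo hqo hgcd e he g h hgp hgq hhp hhq D hD ℓ β hβo ρ hρ
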